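/- Fix integers n ≥ 1, c ≥ 1 and m ∈ {0, …, c}. Let A₁, A₂, C₁, …, C_n ∈ M_c(ℂ) be such that A_{2m} is invertible and A₁C_q = A₂C_{q+1} for q = 1, …, n−1. Then C₁ = (c_m·1 − s_m B_m)^{n−1} D_m and C_n = (s_m·1 + c_m B_m)^{n−1} D_m. -/

import Mathlib

/-! With `A := A_{2m}` and `c_m² + s_m² = 1`, inverting the rotation gives `A₁ = A P` and `A₂ = A Q`
for the commuting matrices `P = s_m + c_m B_m`, `Q = c_m - s_m B_m`, and `c_m Q + s_m P = 1`.
Cancelling `A`, the recursion becomes `P C_q = Q C_{q+1}`, hence `P^k C_i = Q^k C_{i+k}`. So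
`Q^{n-1} C_q = Q^{n-1-q} P^q C₁` and `P^{n-1} C_q = Q^{n-1-q} P^q C_n`, and by the binomial theorem
`Q^{n-1} D_m = (c_m Q + s_m P)^{n-1} C₁ = C₁`, `P^{n-1} D_m = C_n`. -/

open Matrix

abbrev Mat (c : ℕ) := Matrix (Fin c) (Fin c) ℂ

noncomputable def cS (c : ℕ) (m : ℤ) : ℂ :=
  ((Real.cos (Real.pi * (m : ℝ) / ((c : ℝ) + 1)) : ℝ) : ℂ)

noncomputable def sS (c : ℕ) (m : ℤ) : ℂ :=
  ((Real.sin (Real.pi * (m : ℝ) / ((c : ℝ) + 1)) : ℝ) : ℂ)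

noncomputable def A1M (c : ℕ) (m : ℤ) (A1 A2 : Mat c) : Mat c :=
  cS c m • A1 - sS c m • A2

noncomputable def A2M (c : ℕ) (m : ℤ) (A1 A2 : Mat c) : Mat c :=
  sS c m • A1 + cS c m • A2

noncomputable def BM (c : ℕ) (m : ℤ) (A1 A2 : Mat c) : Mat c :=
  (A2M c m A1 A2)⁻¹ * A1M c m A1 A2

noncomputable def DM (n c : ℕ) (m : ℤ) (C : Fin n → Mat c) : Mat c :=
  ∑ q : Fin n, (((n - 1).choose q.val : ℂ) * cS c m ^ (n - 1 - q.val) * sS c m ^ q.val) • C q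

noncomputable def EM (n c : ℕ) (m : ℤ) (A1 A2 : Mat c) (C : Fin n → Mat c) : Mat c :=
  DM n c m C * A2M c m A1 A2

/-- Condition (P1). -/
def CondP1 (n c : ℕ) (A1 A2 : Mat c) (C : Fin n → Mat c) : Prop :=
  (∀ h : n = 1, A1 * C ⟨0, by omega⟩ * A2 = A2 * C ⟨0, by omega⟩ * A1) ∧
  ∀ q : ℕ, ∀ hq : q + 1 < n,
    A1 * C ⟨q, by omega⟩ = A2 * C ⟨q + 1, hq⟩ ∧
    C ⟨q, by omega⟩ * A1 = C ⟨q + 1, hq⟩ * A2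

/-- Condition (P2). -/
def CondP2 (c : ℕ) (A1 A2 : Mat c) : Prop :=
  ∃ ν : ℂ × ℂ, ν ≠ 0 ∧ (ν.1 • A1 + ν.2 • A2).det ≠ 0

/-- Condition (P3), with `C1`, `Cn` the first and last of the `C` matrices. -/
def CondP3 (n c : ℕ) (A1 A2 C1 Cn : Mat c) (e : Fin c → ℂ) : Prop :=
  ∀ l1 l2 m1 m2 : ℂ, (l1, l2) ≠ 0 → l1 ^ n * m1 + l2 ^ n * m2 = 0 →
    ∀ v : Fin c → ℂ,
      (l2 • A1 + l1 • A2).mulVec v = 0 →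
      (C1 * A2 + m1 • 1).mulVec v = 0 →
      (Cn * A1 + ((-1 : ℂ) ^ (n - 1) * m2) • 1).mulVec v = 0 →
      e ⬝ᵥ v = 0 → v = 0

/-- Membership in `P^n(c)`: conditions (P1), (P2), (P3). -/
def CondP (n c : ℕ) (hn : 0 < n) (A1 A2 : Mat c) (C : Fin n → Mat c) (e : Fin c → ℂ) : Prop :=
  CondP1 n c A1 A2 C ∧ CondP2 c A1 A2 ∧
    CondP3 n c A1 A2 (C ⟨0, hn⟩) (C ⟨n - 1, by omega⟩) e

/-- Condition (T2). -/
def CondT2 (c : ℕ) (b1 b2 : Mat c) (e : Fin c → ℂ) : Prop :=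
  ∀ z w : ℂ, ∀ v : Fin c → ℂ,
    (b1 + z • 1).mulVec v = 0 → (b2 + w • 1).mulVec v = 0 → e ⬝ᵥ v = 0 → v = 0

/-- ADHM data: conditions (T1) and (T2). -/
def ADHM (c : ℕ) (b1 b2 : Mat c) (e : Fin c → ℂ) : Prop :=
  b1 * b2 = b2 * b1 ∧ CondT2 c b1 b2 e

section Binomial

variable {K R : Type*} [CommSemiring K] [Semiring R] [Algebra K R]

theorem pow_mul_eq_pow_mul_of_mul_eq_mul {P Q : R} (hPQ : Commute P Q) {C : ℕ → R} {N : ℕ}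
    (hC : ∀ q < N, P * C q = Q * C (q + 1)) :
    ∀ {k i : ℕ}, i + k ≤ N → P ^ k * C i = Q ^ k * C (i + k)
  | 0, i, _ => by simp
  | k + 1, i, hki => by
    calc P ^ (k + 1) * C i = P ^ k * (Q * C (i + 1)) := by
          rw [pow_succ, mul_assoc, hC i (by omega)]
      _ = Q * (P ^ k * C (i + 1)) := by
          rw [← mul_assoc, ← mul_assoc, (hPQ.pow_left k).eq]
      _ = Q ^ (k + 1) * C (i + (k + 1)) := by
          rw [pow_mul_eq_pow_mul_of_mul_eq_mul hPQ hC (by omega), ← mul_assoc, ← pow_succ',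
            add_right_comm, add_assoc]

theorem Commute.smul_add_smul_pow {P Q : R} (hPQ : Commute P Q) (a b : K) (N : ℕ) :
    (a • Q + b • P) ^ N =
      ∑ q ∈ Finset.range (N + 1), ((N.choose q : K) * a ^ (N - q) * b ^ q) • (Q ^ (N - q) * P ^ q) := by
  rw [add_comm, ((hPQ.smul_left b).smul_right a).add_pow]
  refine Finset.sum_congr rfl fun q _ => ?_
  rw [smul_pow, smul_pow, smul_mul_smul_comm, (hPQ.pow_pow _ _).eq, ← Nat.cast_comm,
    ← nsmul_eq_mul, ← Nat.cast_smul_eq_nsmul K, smul_smul]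
  ring_nf

theorem pow_mul_sum_choose_smul {P Q : R} (hPQ : Commute P Q) {C : ℕ → R} {N : ℕ}
    (hC : ∀ q < N, P * C q = Q * C (q + 1)) (a b : K) :
    let D := ∑ q ∈ Finset.range (N + 1), ((N.choose q : K) * a ^ (N - q) * b ^ q) • C q
    Q ^ N * D = (a • Q + b • P) ^ N * C 0 ∧ P ^ N * D = (a • Q + b • P) ^ N * C N := by
  intro D
  rw [hPQ.smul_add_smul_pow, Finset.sum_mul, Finset.sum_mul, Finset.mul_sum, Finset.mul_sum]
  constructor <;> refine Finset.sum_congr rfl fun q hq => ?_ <;>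
    rw [mul_smul_comm, smul_mul_assoc] <;> congr 1 <;>
    have hqN : q ≤ N := Finset.mem_range_succ_iff.mp hq
  · calc Q ^ N * C q = Q ^ (N - q) * (Q ^ q * C (0 + q)) := by
          rw [zero_add, ← mul_assoc, ← pow_add, Nat.sub_add_cancel hqN]
      _ = Q ^ (N - q) * P ^ q * C 0 := by
          rw [← pow_mul_eq_pow_mul_of_mul_eq_mul hPQ hC (by omega), mul_assoc]
  · calc P ^ N * C q = P ^ q * (P ^ (N - q) * C q) := by
          rw [← mul_assoc, ← pow_add, Nat.add_sub_cancel' hqN]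
      _ = Q ^ (N - q) * P ^ q * C N := by
          rw [pow_mul_eq_pow_mul_of_mul_eq_mul hPQ hC (by omega), Nat.add_sub_cancel' hqN,
            ← mul_assoc, (hPQ.pow_pow _ _).symm.eq]

end Binomial

section Rotation

theorem cS_sq_add_sS_sq (c : ℕ) (m : ℤ) : cS c m ^ 2 + sS c m ^ 2 = 1 := by
  unfold cS sS
  exact_mod_cast Real.cos_sq_add_sin_sq _

variable {c : ℕ} {m : ℤ} {A1 A2 : Mat c}

theorem A2M_mul_BM (h : IsUnit (A2M c m A1 A2)) :
    A2M c m A1 A2 * BM c m A1 A2 = A1M c m A1 A2 := by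
  rw [BM, ← Matrix.mul_assoc, Matrix.mul_nonsing_inv _ ((Matrix.isUnit_iff_isUnit_det _).mp h),
    Matrix.one_mul]

theorem A2M_mul_sS_add_cS_BM (h : IsUnit (A2M c m A1 A2)) :
    A2M c m A1 A2 * (sS c m • 1 + cS c m • BM c m A1 A2) = A1 := by
  rw [mul_add, mul_smul_comm, mul_smul_comm, mul_one, A2M_mul_BM h, A1M, A2M]
  linear_combination (norm := module) (cS_sq_add_sS_sq c m) • A1

theorem A2M_mul_cS_sub_sS_BM (h : IsUnit (A2M c m A1 A2)) :
    A2M c m A1 A2 * (cS c m • 1 - sS c m • BM c m A1 A2) = A2 := by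
  rw [mul_sub, mul_smul_comm, mul_smul_comm, mul_one, A2M_mul_BM h, A1M, A2M]
  linear_combination (norm := module) (cS_sq_add_sS_sq c m) • A2

theorem cS_smul_add_sS_smul (B : Mat c) :
    cS c m • (cS c m • 1 - sS c m • B) + sS c m • (sS c m • 1 + cS c m • B) = 1 := by
  linear_combination (norm := module) (cS_sq_add_sS_sq c m) • (1 : Mat c)

theorem DM_eq_sum_range {n : ℕ} (C : Fin n → Mat c) {C' : ℕ → Mat c}
    (hC' : ∀ q : Fin n, C' q = C q) (hn : 0 < n) :
    DM n c m C = ∑ q ∈ Finset.range (n - 1 + 1),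
      (((n - 1).choose q : ℂ) * cS c m ^ (n - 1 - q) * sS c m ^ q) • C' q := by
  rw [DM, Nat.sub_add_cancel hn, Finset.sum_range fun q => _ • C' q]
  simp only [hC']

end Rotation

/-- if A_{2m} is invertible and A₁C_q = A₂C_{q+1} for q = 1,…,n−1, then
C₁ = (c_m·1 − s_m B_m)^{n−1} D_m and C_n = (s_m·1 + c_m B_m)^{n−1} D_m. -/
theorem stmt7 (n c : ℕ) (hn : 0 < n) (m : ℕ)
    (A1 A2 : Mat c) (C : Fin n → Mat c)
    (hinv : IsUnit (A2M c m A1 A2))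
    (hrec : ∀ q : ℕ, ∀ hq : q + 1 < n,
      A1 * C ⟨q, by omega⟩ = A2 * C ⟨q + 1, hq⟩) :
    C ⟨0, hn⟩ = (cS c m • (1 : Mat c) - sS c m • BM c m A1 A2) ^ (n - 1) * DM n c m C ∧
    C ⟨n - 1, by omega⟩ =
      (sS c m • (1 : Mat c) + cS c m • BM c m A1 A2) ^ (n - 1) * DM n c m C := by
  set B := BM c m A1 A2
  set P : Mat c := sS c m • 1 + cS c m • B
  set Q : Mat c := cS c m • 1 - sS c m • B
  have hPQ : Commute P Q :=
    ((Commute.one_left Q).smul_left _).add_left <| Commute.smul_left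
      (((Commute.one_right B).smul_right _).sub_right ((Commute.refl B).smul_right _)) _
  let C' : ℕ → Mat c := fun i => if h : i < n then C ⟨i, h⟩ else 0
  have hC' : ∀ q : Fin n, C' q = C q := fun q => dif_pos q.isLt
  have hrec' : ∀ q < n - 1, P * C' q = Q * C' (q + 1) := by
    intro q hq
    apply hinv.mul_left_cancel
    rw [← mul_assoc, ← mul_assoc, A2M_mul_sS_add_cS_BM hinv, A2M_mul_cS_sub_sS_BM hinv]
    simpa only [C', dif_pos (show q < n by omega), dif_pos (show q + 1 < n by omega)]
      using hrec q (by omega)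
  obtain ⟨hfirst, hlast⟩ := pow_mul_sum_choose_smul hPQ hrec' (cS c m) (sS c m)
  rw [cS_smul_add_sS_smul, one_pow, one_mul] at hfirst hlast
  rw [DM_eq_sum_range C hC' hn, hfirst, hlast]
  exact ⟨(hC' ⟨0, hn⟩).symm, (hC' ⟨n - 1, by omega⟩).symm⟩
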